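/- The class of languages accepted by quasi-deterministic stateless (qDN) sensing 5'→3' WK automata is properly included in the class of languages accepted by quasi-deterministic sensing 5'→3' WK automata; in particular, the language b*ab* + b* = { bⁱabʲ : i,j ≥ 0 } ∪ { bⁱ : i ≥ 0 } is accepted by a quasi-deterministic sensing 5'→3' WK automaton but by no stateless sensing 5'→3' WK automaton. -/

import Mathlib

open Computability

/-- The two-letter alphabet `{a, b}`. -/
inductive Letter : Type
  | a : Letter
  | b : Letter
deriving DecidableEq

instance instFintypeLetter : Fintype Letter :=
  ⟨{Letter.a, Letter.b}, fun x => by cases x <;> simp⟩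

open Letter

/-- A sensing 5'→3' Watson-Crick automaton over the alphabet `T` with state set `Q`:
an initial state `q0`, a set `F` of final states, and a transition mapping
`δ : Q × T* × T* → 2^Q` that is nonempty for only finitely many triples. -/
structure WKAutomaton (T : Type) (Q : Type) where
  q0 : Q
  F : Set Q
  δ : Q → List T → List T → Set Q
  finite_delta : {t : Q × List T × List T | (δ t.1 t.2.1 t.2.2).Nonempty}.Finite

namespace WKAutomaton

variable {T Q : Type}

/-- One computation step on configurations:
`(q, x ++ w' ++ y) ⇒ (q', w')` iff `q' ∈ δ q x y`. -/
def Step (A : WKAutomaton T Q) (c c' : Q × List T) : Prop :=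
  ∃ x y : List T, c.2 = x ++ c'.2 ++ y ∧ c'.1 ∈ A.δ c.1 x y

/-- The accepted language: words `w` with `(q₀, w) ⇒* (q_F, λ)` for some final `q_F`. -/
def Lang (A : WKAutomaton T Q) : Set (List T) :=
  {w | ∃ qf ∈ A.F, Relation.ReflTransGen A.Step (A.q0, w) (qf, [])}

/-- `A` is deterministic: in every configuration at most one computation step
(choice of `x`, `y`, `w'`, `q'`) is applicable. -/
def Deterministic (A : WKAutomaton T Q) : Prop :=
  ∀ (q : Q) (w x₁ y₁ w₁ x₂ y₂ w₂ : List T) (q₁ q₂ : Q),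
    w = x₁ ++ w₁ ++ y₁ → q₁ ∈ A.δ q x₁ y₁ →
    w = x₂ ++ w₂ ++ y₂ → q₂ ∈ A.δ q x₂ y₂ →
    x₁ = x₂ ∧ y₁ = y₂ ∧ w₁ = w₂ ∧ q₁ = q₂

/-- `A` is quasi-deterministic: for every configuration `(q,w)`, whenever
`(q,w) ⇒ (p,u)` and `(q,w) ⇒ (r,v)`, it holds that `p = r`. -/
def QuasiDet (A : WKAutomaton T Q) : Prop :=
  ∀ (q : Q) (w : List T) (p r : Q) (u v : List T),
    A.Step (q, w) (p, u) → A.Step (q, w) (r, v) → p = r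

/-- `A` is state-deterministic: for every state `q` there is at most one state `p`
with `p ∈ δ(q,u,v)` for some words `u`, `v`. -/
def StateDet (A : WKAutomaton T Q) : Prop :=
  ∀ (q p₁ p₂ : Q) (u₁ v₁ u₂ v₂ : List T),
    p₁ ∈ A.δ q u₁ v₁ → p₂ ∈ A.δ q u₂ v₂ → p₁ = p₂

/-- `A` is stateless: `Q = F = {q₀}`. -/
def Stateless (A : WKAutomaton T Q) : Prop :=
  (∀ q : Q, q = A.q0) ∧ A.F = {A.q0}

/-- `A` is all-final: `Q = F`. -/
def AllFinal (A : WKAutomaton T Q) : Prop := A.F = Set.univ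

/-- `A` is simple: at most one head reads in each step. -/
def Simple (A : WKAutomaton T Q) : Prop :=
  ∀ (q : Q) (u v : List T), (A.δ q u v).Nonempty → u = [] ∨ v = []

/-- `A` is 1-limited: exactly one letter is read in each step. -/
def OneLimited (A : WKAutomaton T Q) : Prop :=
  ∀ (q : Q) (u v : List T), (A.δ q u v).Nonempty →
    (u = [] ∧ v.length = 1) ∨ (u.length = 1 ∧ v = [])

end WKAutomaton

/-- Equality of languages modulo the empty word. -/
def EqModLambda {T : Type} (L₁ L₂ : Set (List T)) : Prop :=
  ∀ w : List T, w ≠ [] → (w ∈ L₁ ↔ w ∈ L₂)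

/-- `L` is accepted (modulo the empty word) by some sensing 5'→3' WK automaton
with a finite state set satisfying the property `P`. -/
def AcceptsWith (T : Type) (P : ∀ Q : Type, WKAutomaton T Q → Prop)
    (L : Set (List T)) : Prop :=
  ∃ (Q : Type) (_ : Finite Q) (A : WKAutomaton T Q), P Q A ∧ EqModLambda A.Lang L

/-- The language `b*ab* + b*`. -/
def Lbabb : Set (List Letter) :=
  {w | (∃ i j : ℕ, w = List.replicate i b ++ a :: List.replicate j b) ∨
       (∃ i : ℕ, w = List.replicate i b)}

/-
Every DFA is simulated by a quasi-deterministic WK automaton that reads one letter per step with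
its left head, so every regular language, `b*ab* + b*` (the words with at most one `a`) among them,
is quasi-deterministically accepted. A stateless automaton instead has no memory between steps:
any transition it uses on one word may be prepended and appended around any other accepted word.
A run accepting `a` must contain a transition reading exactly `a`, and wrapping it around `a`
itself yields `aa`, which is outside `b*ab* + b*`.
-/

open Relation

namespace DFA

variable {T σ : Type} (M : DFA T σ)

def toWKAutomaton [Finite T] [Finite σ] : WKAutomaton T σ where
  q0 := M.start
  F := M.accept
  δ q x y := {p | ∃ t, x = [t] ∧ y = [] ∧ p = M.step q t}
  finite_delta := by
    refine (Set.finite_range fun s : σ × T => (s.1, [s.2], ([] : List T))).subset ?_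
    rintro ⟨q, x, y⟩ ⟨p, t, rfl, rfl, -⟩
    exact ⟨(q, t), rfl⟩

variable [Finite T] [Finite σ]

theorem toWKAutomaton_step_iff {q p : σ} {w u : List T} :
    M.toWKAutomaton.Step (q, w) (p, u) ↔ ∃ t, w = t :: u ∧ p = M.step q t := by
  constructor
  · rintro ⟨x, y, hw, t, rfl, rfl, hp⟩
    exact ⟨t, by simpa using hw, hp⟩
  · rintro ⟨t, rfl, rfl⟩
    exact ⟨[t], [], by simp, t, rfl, rfl, rfl⟩

theorem toWKAutomaton_reflTransGen_iff {q p : σ} {w : List T} :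
    ReflTransGen M.toWKAutomaton.Step (q, w) (p, []) ↔ M.evalFrom q w = p := by
  induction w generalizing q with
  | nil =>
    refine ⟨fun h => ?_, fun h => h ▸ .refl⟩
    rcases h.cases_head with h | ⟨⟨q', u⟩, hstep, -⟩
    · exact (Prod.ext_iff.mp h).1
    · obtain ⟨t, ht, -⟩ := M.toWKAutomaton_step_iff.mp hstep
      cases ht
  | cons t w ih =>
    rw [evalFrom_cons, ← ih]
    refine ⟨fun h => ?_, fun h => .head (M.toWKAutomaton_step_iff.mpr ⟨t, rfl, rfl⟩) h⟩
    rcases h.cases_head with h | ⟨⟨q', u⟩, hstep, hrest⟩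
    · cases h
    · obtain ⟨t', ht', rfl⟩ := M.toWKAutomaton_step_iff.mp hstep
      obtain ⟨rfl, rfl⟩ := List.cons_eq_cons.mp ht'
      exact hrest

theorem toWKAutomaton_lang : M.toWKAutomaton.Lang = M.accepts := by
  ext w
  simp only [WKAutomaton.Lang, toWKAutomaton_reflTransGen_iff, exists_eq_right']
  rfl

theorem toWKAutomaton_quasiDet : M.toWKAutomaton.QuasiDet := by
  intro q w p r u v hp hr
  obtain ⟨t, rfl, rfl⟩ := (M.toWKAutomaton_step_iff).mp hp
  obtain ⟨t', ht', rfl⟩ := (M.toWKAutomaton_step_iff).mp hr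
  rw [(List.cons_eq_cons.mp ht').1]

end DFA

theorem Language.IsRegular.acceptsWith_quasiDet {T : Type} [Finite T] {L : Language T}
    (hL : L.IsRegular) : AcceptsWith T (fun _ A => A.QuasiDet) L := by
  obtain ⟨σ, _, M, rfl⟩ := hL
  exact ⟨σ, inferInstance, M.toWKAutomaton, M.toWKAutomaton_quasiDet,
    fun w _ => by rw [M.toWKAutomaton_lang]⟩

namespace DFA

variable {T : Type} [DecidableEq T]

def atMostOnce (t : T) : DFA T (Fin 3) where
  step q x := if x = t then ⟨min (q + 1) 2, by omega⟩ else q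
  start := 0
  accept := {q | (q : ℕ) ≤ 1}

theorem val_evalFrom_atMostOnce (t : T) (q : Fin 3) (w : List T) :
    ((atMostOnce t).evalFrom q w : ℕ) = min (q + w.count t) 2 := by
  induction w generalizing q with
  | nil => simp only [evalFrom_nil, List.count_nil]; omega
  | cons x w ih =>
    rw [evalFrom_cons, ih, List.count_cons]
    by_cases hx : x = t <;> simp only [atMostOnce, hx, if_true, if_false, beq_iff_eq] <;> omega

theorem accepts_atMostOnce (t : T) : (atMostOnce t).accepts = {w | w.count t ≤ 1} := by
  ext w
  change ((atMostOnce t).evalFrom 0 w : ℕ) ≤ 1 ↔ w.count t ≤ 1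
  rw [val_evalFrom_atMostOnce]
  omega

end DFA

theorem Language.isRegular_setOf_count_le_one {T : Type} [DecidableEq T] (t : T) :
    Language.IsRegular {w : List T | w.count t ≤ 1} :=
  ⟨Fin 3, inferInstance, DFA.atMostOnce t, DFA.accepts_atMostOnce t⟩

theorem eq_replicate_b_of_count_a_eq_zero {w : List Letter} (h : w.count a = 0) :
    w = List.replicate w.length b := by
  refine List.eq_replicate_iff.mpr ⟨rfl, fun x hx => ?_⟩
  cases x
  · exact absurd hx (List.count_eq_zero.mp h)
  · rfl

theorem Lbabb_eq_setOf_count_le_one : Lbabb = {w | w.count a ≤ 1} := by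
  ext w
  refine ⟨?_, fun hw => ?_⟩
  · rintro (⟨i, j, rfl⟩ | ⟨i, rfl⟩) <;> simp [List.count_replicate]
  induction w with
  | nil => exact Or.inr ⟨0, rfl⟩
  | cons x w ih =>
    cases x
    · have hw0 : w.count a = 0 := by simpa using hw
      exact Or.inl ⟨0, w.length, by rw [← eq_replicate_b_of_count_a_eq_zero hw0]; rfl⟩
    · rcases ih (by simpa using hw) with ⟨i, j, rfl⟩ | ⟨i, rfl⟩
      · exact Or.inl ⟨i + 1, j, rfl⟩
      · exact Or.inr ⟨i + 1, rfl⟩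

namespace WKAutomaton

variable {T Q : Type} (A : WKAutomaton T Q)

theorem exists_delta_of_reflTransGen_singleton {q qf : Q} {t : T}
    (h : ReflTransGen A.Step (q, [t]) (qf, [])) :
    ∃ q' x y, (A.δ q' x y).Nonempty ∧ x ++ y = [t] := by
  suffices ∀ c, ReflTransGen A.Step c (qf, []) → c.2 = [t] →
      ∃ q' x y, (A.δ q' x y).Nonempty ∧ x ++ y = [t] from this _ h rfl
  intro c hc
  induction hc using ReflTransGen.head_induction_on with
  | refl => intro h; cases h
  | @head c c' hstep _ ih =>
    intro hc
    obtain ⟨x, y, hw, hp⟩ := hstep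
    rw [hc] at hw
    rcases List.singleton_eq_append_iff.mp hw with ⟨hxu, rfl⟩ | ⟨hxu, rfl⟩
    · obtain ⟨rfl, -⟩ := List.append_eq_nil_iff.mp hxu
      exact ⟨c.1, [], [t], ⟨_, hp⟩, rfl⟩
    · rcases List.append_eq_singleton_iff.mp hxu with ⟨-, hu⟩ | ⟨rfl, -⟩
      · exact ih hu
      · exact ⟨c.1, [t], [], ⟨_, hp⟩, rfl⟩

variable {A}

theorem append_append_mem_lang_of_stateless (hA : ∀ q, q = A.q0) {q p : Q} {x y u : List T}
    (hp : p ∈ A.δ q x y) (hu : u ∈ A.Lang) : x ++ u ++ y ∈ A.Lang := by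
  obtain ⟨qf, hqf, hrun⟩ := hu
  exact ⟨qf, hqf, .head ⟨x, y, rfl, hA q ▸ hp⟩ (hA p ▸ hrun)⟩

theorem pair_mem_lang_of_stateless (hA : ∀ q, q = A.q0) {t : T} (ht : [t] ∈ A.Lang) :
    [t, t] ∈ A.Lang := by
  have ⟨_, _, hrun⟩ := ht
  obtain ⟨q, x, y, ⟨p, hp⟩, hxy⟩ := A.exists_delta_of_reflTransGen_singleton hrun
  have hpair : x ++ [t] ++ y = [t, t] := by
    rcases List.append_eq_singleton_iff.mp hxy with ⟨rfl, rfl⟩ | ⟨rfl, rfl⟩ <;> rfl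
  exact hpair ▸ append_append_mem_lang_of_stateless hA hp ht

end WKAutomaton

theorem not_acceptsWith_stateless {T : Type} {L : Set (List T)} {t : T} (h₁ : [t] ∈ L)
    (h₂ : [t, t] ∉ L) : ¬ AcceptsWith T (fun _ A => A.Stateless) L := by
  rintro ⟨Q, _, A, ⟨hA, -⟩, hL⟩
  exact h₂ ((hL _ (List.cons_ne_nil _ _)).mp
    (WKAutomaton.pair_mem_lang_of_stateless hA ((hL _ (List.cons_ne_nil _ _)).mpr h₁)))

/-- The class of languages accepted by quasi-deterministic stateless (qDN) sensing
5'→3' WK automata is properly included in the class of languages accepted by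
quasi-deterministic sensing 5'→3' WK automata; in particular `b*ab* + b*` is
accepted by a quasi-deterministic sensing 5'→3' WK automaton but by no
stateless sensing 5'→3' WK automaton. -/
theorem qDN_proper_subset_qD :
    (∀ (T : Type) (L : Set (List T)),
      AcceptsWith T (fun _ A => A.QuasiDet ∧ A.Stateless) L →
      AcceptsWith T (fun _ A => A.QuasiDet) L) ∧
    AcceptsWith Letter (fun _ A => A.QuasiDet) Lbabb ∧
    ¬ AcceptsWith Letter (fun _ A => A.Stateless) Lbabb := by
  refine ⟨fun T L ⟨Q, hQ, A, ⟨hqd, _⟩, hL⟩ => ⟨Q, hQ, A, hqd, hL⟩, ?_, ?_⟩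
  · rw [Lbabb_eq_setOf_count_le_one]
    exact (Language.isRegular_setOf_count_le_one a).acceptsWith_quasiDet
  · exact not_acceptsWith_stateless (t := a) (by simp [Lbabb_eq_setOf_count_le_one])
      (by simp [Lbabb_eq_setOf_count_le_one])
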